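/- For every y ∈ ℝ and every v ∈ ℝ, with b = √(1 + v²/4) and c = v/2, the integral (1/(2π)) ∫_{-∞}^{∞} K₀(b·√(ξ² + y²)) e^{-cξ} dξ converges and equals e^{-|y|}/2. -/

import Mathlib

open Real Filter Set MeasureTheory

/-- Modified Bessel function of the second kind of order 0. -/
noncomputable def K0 (r : ℝ) : ℝ := ∫ t in Ioi (0 : ℝ), Real.exp (-r * Real.cosh t)

/-!
Substituting `s = r eᵗ / 2` gives `2 K₀(r) = ∫₀^∞ e^{-s - r²/(4s)} ds / s`. For `r = b √(ξ² + y²)`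
the resulting double integral is Gaussian in `ξ`; after Fubini, integrating out `ξ` leaves
`∫₀^∞ e^{-κs - (by)²/(4s)} ds / √s` with `κ = (b² - c²) / b²`. The Cauchy–Schlömilch substitution
`w = √s - r / (2√s)`, together with the symmetry `s ↦ r² / (4s)`, evaluates
`∫₀^∞ e^{-s - r²/(4s)} ds / √s = √π e^{-r}`. Hence
`∫ K₀(b √(ξ² + y²)) e^{-cξ} dξ = π e^{-√(b² - c²) |y|} / √(b² - c²)` whenever `|c| < b`,
and `b² - c² = 1` for the parameters of the theorem.
-/

section ConstDiv

variable {E : Type*} [NormedAddCommGroup E] [NormedSpace ℝ E] {a : ℝ}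

lemma image_const_div_Ioi_zero (ha : 0 < a) : (fun x : ℝ => a / x) '' Ioi 0 = Ioi 0 := by
  refine Subset.antisymm (image_subset_iff.2 fun x hx => div_pos ha hx) fun x hx => ?_
  exact ⟨a / x, div_pos ha hx, div_div_cancel₀ ha.ne'⟩

lemma injOn_const_div_Ioi_zero (ha : 0 < a) : InjOn (fun x : ℝ => a / x) (Ioi 0) :=
  fun _ _ _ _ h => inv_injective <| mul_left_cancel₀ ha.ne' h

lemma hasDerivAt_const_div {x : ℝ} (hx : x ≠ 0) :
    HasDerivAt (fun x : ℝ => a / x) (-(a / x ^ 2)) x := by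
  simpa [div_eq_mul_inv, neg_div] using (hasDerivAt_inv hx).const_mul a

theorem integrableOn_Ioi_comp_const_div_iff (g : ℝ → E) (ha : 0 < a) :
    IntegrableOn (fun x => (a / x ^ 2) • g (a / x)) (Ioi 0) ↔ IntegrableOn g (Ioi 0) := by
  have := integrableOn_image_iff_integrableOn_abs_deriv_smul measurableSet_Ioi
    (fun x hx => (hasDerivAt_const_div (ne_of_gt hx)).hasDerivWithinAt)
    (injOn_const_div_Ioi_zero ha) g
  rw [image_const_div_Ioi_zero ha] at this
  rw [this]
  refine integrableOn_congr_fun (fun x _ => ?_) measurableSet_Ioi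
  rw [abs_neg, abs_of_nonneg (by positivity)]

theorem integral_comp_const_div_Ioi (g : ℝ → E) (ha : 0 < a) :
    ∫ x in Ioi 0, (a / x ^ 2) • g (a / x) = ∫ x in Ioi 0, g x := by
  have := integral_image_eq_integral_abs_deriv_smul measurableSet_Ioi
    (fun x hx => (hasDerivAt_const_div (ne_of_gt hx)).hasDerivWithinAt)
    (injOn_const_div_Ioi_zero ha) g
  rw [image_const_div_Ioi_zero ha] at this
  rw [this]
  refine setIntegral_congr_fun measurableSet_Ioi (fun x _ => ?_)
  rw [abs_neg, abs_of_nonneg (by positivity)]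

end ConstDiv

theorem integrableOn_exp_neg_mul_add_sq_div_div_sqrt {κ : ℝ} (hκ : 0 < κ) (r : ℝ) :
    IntegrableOn (fun s => exp (-(κ * s + r ^ 2 / (4 * s))) / √s) (Ioi 0) := by
  refine (integrableOn_rpow_mul_exp_neg_mul_rpow (p := 1) (s := -(1 / 2)) (by norm_num) one_pos
    hκ).mono' (by fun_prop : Measurable _).aestronglyMeasurable ?_
  filter_upwards [ae_restrict_mem measurableSet_Ioi] with s (hs : 0 < s)
  rw [norm_of_nonneg (by positivity), rpow_one, rpow_neg hs.le, ← sqrt_eq_rpow, div_eq_inv_mul]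
  gcongr
  have : 0 ≤ r ^ 2 / (4 * s) := by positivity
  linarith

section CauchySchlomilch

variable {r : ℝ}

lemma sq_sqrt_sub_div_sqrt_add {s : ℝ} (hs : 0 < s) :
    (√s - r / (2 * √s)) ^ 2 + r = s + r ^ 2 / (4 * s) := by
  have := sqrt_pos.2 hs
  field_simp
  rw [sq_sqrt hs.le]
  ring

lemma hasDerivAt_sqrt_sub_div_sqrt {s : ℝ} (hs : 0 < s) :
    HasDerivAt (fun s => √s - r / (2 * √s)) (1 / (2 * √s) + r / (4 * (s * √s))) s := by
  have hsq := sqrt_pos.2 hs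
  refine ((hasDerivAt_sqrt hs.ne').sub ((hasDerivAt_const s r).div
    ((hasDerivAt_sqrt hs.ne').const_mul 2) (by positivity))).congr_deriv ?_
  field_simp
  rw [sq_sqrt hs.le]
  ring

lemma strictMonoOn_sqrt_sub_div_sqrt (hr : 0 ≤ r) :
    StrictMonoOn (fun s => √s - r / (2 * √s)) (Ioi 0) := by
  intro a ha b _ hab
  have hsqrt : √a < √b := sqrt_lt_sqrt (le_of_lt ha) hab
  have : r / (2 * √b) ≤ r / (2 * √a) := by
    have := sqrt_pos.2 (show (0:ℝ) < a from ha)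
    gcongr
  simp only
  linarith

lemma image_sqrt_sub_div_sqrt (hr : 0 < r) :
    (fun s => √s - r / (2 * √s)) '' Ioi 0 = univ := by
  refine eq_univ_of_forall fun w => ?_
  -- the positive root `u` of `u ^ 2 - w * u - r / 2 = 0` satisfies `u - r / (2 * u) = w`
  set u := (w + √(w ^ 2 + 2 * r)) / 2
  have hd : w ^ 2 < √(w ^ 2 + 2 * r) ^ 2 := by rw [sq_sqrt (by positivity)]; linarith
  have hu : 0 < u := by
    have := (abs_lt_of_sq_lt_sq' hd (sqrt_nonneg _)).1
    simp only [u]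
    linarith
  refine ⟨u ^ 2, mem_Ioi.2 (by positivity), ?_⟩
  have hroot : u ^ 2 - w * u - r / 2 = 0 := by
    have := sq_sqrt (show 0 ≤ w ^ 2 + 2 * r by positivity)
    linear_combination this / 4
  simp only [sqrt_sq hu.le]
  field_simp
  linear_combination 2 * hroot

lemma exp_neg_add_sq_div_comp_inversion (hr : 0 < r) {s : ℝ} (hs : 0 < s) :
    (r ^ 2 / 4 / s ^ 2) • (exp (-(r ^ 2 / 4 / s + r ^ 2 / (4 * (r ^ 2 / 4 / s)))) /
      √(r ^ 2 / 4 / s)) = r / 2 * (exp (-(s + r ^ 2 / (4 * s))) / (s * √s)) := by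
  have hsq := sqrt_pos.2 hs
  have : √(r ^ 2 / 4 / s) = r / (2 * √s) := by
    rw [sqrt_div' _ hs.le, sqrt_div' _ (by norm_num), sqrt_sq hr.le,
      show (4 : ℝ) = 2 ^ 2 by norm_num, sqrt_sq (by norm_num), div_div]
  rw [this, smul_eq_mul, show r ^ 2 / 4 / s + r ^ 2 / (4 * (r ^ 2 / 4 / s)) = s + r ^ 2 / (4 * s)
    by field_simp; ring]
  field_simp
  rw [sq_sqrt hs.le]
  ring

theorem integrableOn_exp_neg_add_sq_div_div_mul_sqrt (hr : 0 < r) :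
    IntegrableOn (fun s => exp (-(s + r ^ 2 / (4 * s))) / (s * √s)) (Ioi 0) := by
  have := (integrableOn_Ioi_comp_const_div_iff _ (by positivity : 0 < r ^ 2 / 4)).2
    (integrableOn_exp_neg_mul_add_sq_div_div_sqrt one_pos r)
  simp only [one_mul] at this
  refine IntegrableOn.congr_fun ((this.congr_fun (fun s hs =>
    exp_neg_add_sq_div_comp_inversion hr hs) measurableSet_Ioi).const_mul (2 / r))
    (fun s _ => ?_) measurableSet_Ioi
  field_simp

theorem integral_exp_neg_add_sq_div_div_sqrt_eq_mul (hr : 0 < r) :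
    ∫ s in Ioi 0, exp (-(s + r ^ 2 / (4 * s))) / √s =
      r / 2 * ∫ s in Ioi 0, exp (-(s + r ^ 2 / (4 * s))) / (s * √s) := by
  rw [← integral_const_mul, ← setIntegral_congr_fun measurableSet_Ioi
    fun s hs => exp_neg_add_sq_div_comp_inversion hr hs,
    integral_comp_const_div_Ioi (fun s => exp (-(s + r ^ 2 / (4 * s))) / √s) (by positivity)]

theorem integral_exp_neg_add_sq_div_div_sqrt_of_pos (hr : 0 < r) :
    ∫ s in Ioi 0, exp (-(s + r ^ 2 / (4 * s))) / √s = √π * exp (-r) := by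
  have hI : IntegrableOn (fun s => exp (-(s + r ^ 2 / (4 * s))) / √s) (Ioi 0) := by
    simpa only [one_mul] using integrableOn_exp_neg_mul_add_sq_div_div_sqrt one_pos r
  have hJ := integrableOn_exp_neg_add_sq_div_div_mul_sqrt hr
  have hIJ := integral_exp_neg_add_sq_div_div_sqrt_eq_mul hr
  -- substitute `w = √s - r / (2 * √s)` in `∫ e^{-(w² + r)} dw`; by `hIJ` the Jacobian's two
  -- terms contribute equally
  have hsub := integral_image_eq_integral_abs_deriv_smul measurableSet_Ioi
    (fun s hs => (hasDerivAt_sqrt_sub_div_sqrt (r := r) hs).hasDerivWithinAt)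
    (strictMonoOn_sqrt_sub_div_sqrt hr.le).injOn (fun w => exp (-(w ^ 2 + r)))
  rw [image_sqrt_sub_div_sqrt hr, setIntegral_univ] at hsub
  have hgauss : ∫ w, exp (-(w ^ 2 + r)) = √π * exp (-r) := by
    have := integral_gaussian 1
    simp only [neg_mul, one_mul, div_one] at this
    simp_rw [neg_add, exp_add, integral_mul_const, this]
  have hjac : ∀ s ∈ Ioi (0 : ℝ),
      |1 / (2 * √s) + r / (4 * (s * √s))| • exp (-((√s - r / (2 * √s)) ^ 2 + r)) =
        1 / 2 * (exp (-(s + r ^ 2 / (4 * s))) / √s) +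
          r / 4 * (exp (-(s + r ^ 2 / (4 * s))) / (s * √s)) := by
    intro s (hs : 0 < s)
    rw [sq_sqrt_sub_div_sqrt_add hs, abs_of_nonneg (by positivity), smul_eq_mul]
    ring
  rw [setIntegral_congr_fun measurableSet_Ioi hjac, integral_add (hI.const_mul _) (hJ.const_mul _),
    integral_const_mul, integral_const_mul, hgauss] at hsub
  linarith

end CauchySchlomilch

theorem integral_exp_neg_add_sq_div_div_sqrt {r : ℝ} (hr : 0 ≤ r) :
    ∫ s in Ioi 0, exp (-(s + r ^ 2 / (4 * s))) / √s = √π * exp (-r) := by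
  rcases hr.eq_or_lt with rfl | hr
  · rw [neg_zero, exp_zero, mul_one, ← Gamma_one_half_eq, Gamma_eq_integral one_half_pos]
    refine setIntegral_congr_fun measurableSet_Ioi fun s (hs : 0 < s) => ?_
    rw [sqrt_eq_rpow, div_eq_mul_inv, ← rpow_neg hs.le]
    norm_num
  · exact integral_exp_neg_add_sq_div_div_sqrt_of_pos hr

theorem integral_exp_neg_mul_add_sq_div_div_sqrt {κ : ℝ} (hκ : 0 < κ) (r : ℝ) :
    ∫ s in Ioi 0, exp (-(κ * s + r ^ 2 / (4 * s))) / √s = √(π / κ) * exp (-(√κ * |r|)) := by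
  have hscale := integral_comp_mul_left_Ioi
    (fun u => exp (-(u + (√κ * |r|) ^ 2 / (4 * u))) / √u) 0 hκ
  rw [mul_zero, integral_exp_neg_add_sq_div_div_sqrt (by positivity), smul_eq_mul] at hscale
  have hsκ := sqrt_pos.2 hκ
  calc ∫ s in Ioi 0, exp (-(κ * s + r ^ 2 / (4 * s))) / √s
      = ∫ s in Ioi 0, √κ * (exp (-(κ * s + (√κ * |r|) ^ 2 / (4 * (κ * s)))) / √(κ * s)) := by
        refine setIntegral_congr_fun measurableSet_Ioi fun s (hs : 0 < s) => ?_
        have := sqrt_pos.2 hs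
        rw [mul_pow, sq_sqrt hκ.le, sq_abs, sqrt_mul hκ.le]
        field_simp
    _ = √(π / κ) * exp (-(√κ * |r|)) := by
        rw [integral_const_mul, hscale, sqrt_div' _ hκ.le]
        field_simp
        rw [sq_sqrt hκ.le]

theorem two_mul_K0_eq_integral {r : ℝ} (hr : 0 < r) :
    2 * K0 r = ∫ s in Ioi 0, exp (-(s + r ^ 2 / (4 * s))) / s := by
  have heven : 2 * K0 r = ∫ t, exp (-r * cosh t) := by
    simp only [K0, ← integral_comp_abs (f := fun t => exp (-r * cosh t)), cosh_abs]
  have himage : (fun t => r / 2 * exp t) '' univ = Ioi 0 := by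
    rw [image_univ, range_comp' (r / 2 * ·) exp, range_exp,
      image_const_mul_Ioi_zero (by positivity)]
  -- substitute `s = r eᵗ / 2`, so that `s + r ^ 2 / (4 * s) = r cosh t`
  have hsub := integral_image_eq_integral_abs_deriv_smul MeasurableSet.univ
    (fun t _ => ((hasDerivAt_exp t).const_mul (r / 2)).hasDerivWithinAt)
    (fun a _ b _ h => exp_injective (mul_left_cancel₀ (by positivity) h))
    (fun s => exp (-(s + r ^ 2 / (4 * s))) / s)
  rw [himage, setIntegral_univ] at hsub
  rw [heven, hsub]
  congr 1 with t
  rw [abs_of_pos (by positivity), smul_eq_mul, mul_div_cancel₀ _ (by positivity), cosh_eq]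
  congr 2
  field_simp
  rw [exp_neg]
  field_simp
  ring

section GaussianLinear

variable {α : ℝ}

lemma exp_neg_mul_sq_add_mul (hα : 0 < α) (m x : ℝ) :
    exp (-(α * x ^ 2 + m * x)) = exp (m ^ 2 / (4 * α)) * exp (-α * (x + m / (2 * α)) ^ 2) := by
  rw [← exp_add]
  congr 1
  field_simp
  ring

theorem integrable_exp_neg_mul_sq_add_mul (hα : 0 < α) (m : ℝ) :
    Integrable (fun x => exp (-(α * x ^ 2 + m * x))) := by
  simp_rw [exp_neg_mul_sq_add_mul hα]
  exact ((integrable_exp_neg_mul_sq hα).comp_add_right _).const_mul _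

theorem integral_exp_neg_mul_sq_add_mul (hα : 0 < α) (m : ℝ) :
    ∫ x, exp (-(α * x ^ 2 + m * x)) = √(π / α) * exp (m ^ 2 / (4 * α)) := by
  simp_rw [exp_neg_mul_sq_add_mul hα, integral_const_mul,
    integral_add_right_eq_self (fun x => exp (-α * x ^ 2)), integral_gaussian, mul_comm]

end GaussianLinear

/-- Integrating out `s` gives `2 K₀(b √(ξ² + y²)) e^{-cξ}`; integrating out `ξ` is a Gaussian
integral. -/
noncomputable def besselGaussKernel (b c y s ξ : ℝ) : ℝ :=
  exp (-c * ξ) * (exp (-(s + b ^ 2 * (ξ ^ 2 + y ^ 2) / (4 * s))) / s)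

section Kernel

variable {b : ℝ} (c y : ℝ)

lemma besselGaussKernel_nonneg {s : ℝ} (hs : 0 < s) (ξ : ℝ) : 0 ≤ besselGaussKernel b c y s ξ := by
  unfold besselGaussKernel
  positivity

theorem integral_besselGaussKernel_Ioi (hb : 0 < b) {ξ : ℝ} (hξ : 0 < ξ ^ 2 + y ^ 2) :
    ∫ s in Ioi 0, besselGaussKernel b c y s ξ = 2 * K0 (b * √(ξ ^ 2 + y ^ 2)) * exp (-c * ξ) := by
  rw [two_mul_K0_eq_integral (by positivity), mul_pow, sq_sqrt hξ.le, mul_comm,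
    ← integral_const_mul]
  rfl

lemma besselGaussKernel_eq {s : ℝ} (hs : 0 < s) (ξ : ℝ) :
    besselGaussKernel b c y s ξ =
      exp (-(s + (b * y) ^ 2 / (4 * s))) / s * exp (-(b ^ 2 / (4 * s) * ξ ^ 2 + c * ξ)) := by
  rw [besselGaussKernel, div_mul_eq_mul_div, ← exp_add, mul_div_assoc', ← exp_add]
  congr 2
  field_simp
  ring

theorem integrable_besselGaussKernel (hb : 0 < b) {s : ℝ} (hs : 0 < s) :
    Integrable (besselGaussKernel b c y s) := by
  rw [show besselGaussKernel b c y s = _ from funext (besselGaussKernel_eq c y hs)]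
  exact (integrable_exp_neg_mul_sq_add_mul (by positivity) c).const_mul _

theorem integral_besselGaussKernel (hb : 0 < b) {s : ℝ} (hs : 0 < s) :
    ∫ ξ, besselGaussKernel b c y s ξ =
      2 * √π / b * (exp (-((b ^ 2 - c ^ 2) / b ^ 2 * s + (b * y) ^ 2 / (4 * s))) / √s) := by
  simp_rw [besselGaussKernel_eq c y hs]
  rw [integral_const_mul, integral_exp_neg_mul_sq_add_mul (by positivity),
    show π / (b ^ 2 / (4 * s)) = (2 * √π * √s / b) ^ 2 by
      field_simp; rw [sq_sqrt pi_pos.le, sq_sqrt hs.le]; ring,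
    sqrt_sq (by positivity)]
  have := sqrt_pos.2 hs
  rw [show exp (-((b ^ 2 - c ^ 2) / b ^ 2 * s + (b * y) ^ 2 / (4 * s))) =
    exp (-(s + (b * y) ^ 2 / (4 * s))) * exp (c ^ 2 / (4 * (b ^ 2 / (4 * s)))) by
      rw [← exp_add]; congr 1; field_simp; ring]
  field_simp
  rw [sq_sqrt hs.le]

theorem integrable_uncurry_besselGaussKernel (hcb : |c| < b) :
    Integrable (Function.uncurry (besselGaussKernel b c y))
      ((volume.restrict (Ioi 0)).prod volume) := by
  have hb : 0 < b := (abs_nonneg c).trans_lt hcb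
  have hκ : 0 < (b ^ 2 - c ^ 2) / b ^ 2 := by
    have := sq_lt_sq' (neg_lt_of_abs_lt hcb) (lt_of_abs_lt hcb)
    exact div_pos (by linarith) (by positivity)
  refine (integrable_prod_iff (by unfold besselGaussKernel; fun_prop)).2 ⟨?_, ?_⟩
  · filter_upwards [ae_restrict_mem measurableSet_Ioi] with s (hs : 0 < s)
    exact integrable_besselGaussKernel c y hb hs
  · refine ((integrableOn_exp_neg_mul_add_sq_div_div_sqrt hκ (b * y)).const_mul
      (2 * √π / b)).congr ?_
    filter_upwards [ae_restrict_mem measurableSet_Ioi] with s (hs : 0 < s)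
    simp only [Function.uncurry_apply_pair, norm_of_nonneg (besselGaussKernel_nonneg c y hs _),
      integral_besselGaussKernel c y hb hs]

end Kernel

theorem integral_K0_mul_exp {b c : ℝ} (hcb : |c| < b) (y : ℝ) :
    Integrable (fun ξ => K0 (b * √(ξ ^ 2 + y ^ 2)) * exp (-c * ξ)) ∧
      ∫ ξ, K0 (b * √(ξ ^ 2 + y ^ 2)) * exp (-c * ξ) =
        π / √(b ^ 2 - c ^ 2) * exp (-(√(b ^ 2 - c ^ 2) * |y|)) := by
  have hb : 0 < b := (abs_nonneg c).trans_lt hcb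
  have hd : 0 < b ^ 2 - c ^ 2 := by
    nlinarith [sq_lt_sq' (neg_lt_of_abs_lt hcb) (lt_of_abs_lt hcb)]
  have hF := integrable_uncurry_besselGaussKernel c y hcb
  have hK : (fun ξ => K0 (b * √(ξ ^ 2 + y ^ 2)) * exp (-c * ξ)) =ᵐ[volume]
      fun ξ => 1 / 2 * ∫ s in Ioi 0, besselGaussKernel b c y s ξ := by
    filter_upwards [compl_mem_ae_iff.2 (measure_singleton (0 : ℝ))] with ξ (hξ : ξ ≠ 0)
    rw [integral_besselGaussKernel_Ioi c y hb (by positivity)]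
    ring
  refine ⟨(hF.integral_prod_right.const_mul _).congr hK.symm, ?_⟩
  rw [integral_congr_ae hK, integral_const_mul, ← integral_integral_swap hF,
    setIntegral_congr_fun measurableSet_Ioi fun s hs => integral_besselGaussKernel c y hb hs,
    integral_const_mul, integral_exp_neg_mul_add_sq_div_div_sqrt (by positivity),
    sqrt_div' _ (by positivity), sqrt_div' _ (by positivity), sqrt_sq hb.le, abs_mul,
    abs_of_pos hb]
  have := sqrt_pos.2 hd
  field_simp
  rw [sq_sqrt pi_pos.le]

theorem stmt_6 (y v : ℝ) :
    Integrable
      (fun ξ : ℝ =>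
        K0 (Real.sqrt (1 + v ^ 2 / 4) * Real.sqrt (ξ ^ 2 + y ^ 2)) *
          Real.exp (-(v / 2) * ξ)) ∧
    (1 / (2 * π)) *
        ∫ ξ : ℝ,
          K0 (Real.sqrt (1 + v ^ 2 / 4) * Real.sqrt (ξ ^ 2 + y ^ 2)) *
            Real.exp (-(v / 2) * ξ)
      = Real.exp (-|y|) / 2 := by
  have hcb : |v / 2| < √(1 + v ^ 2 / 4) := by
    rw [← sqrt_sq_eq_abs]
    exact sqrt_lt_sqrt (sq_nonneg _) (by linarith [show (v / 2) ^ 2 = v ^ 2 / 4 by ring])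
  have hbc : √(1 + v ^ 2 / 4) ^ 2 - (v / 2) ^ 2 = 1 := by
    rw [sq_sqrt (by positivity)]
    ring
  obtain ⟨hint, hval⟩ := integral_K0_mul_exp hcb y
  refine ⟨hint, ?_⟩
  rw [hval, hbc, sqrt_one, one_mul]
  field_simp
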